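/- If C is a symmetric positive semidefinite N × N real matrix and the all-ones vector 1 ∈ ℝ^N does not lie in the range (column space) of C, then rank(Δ) = rank(C). -/

import Mathlib

open Matrix

/-- The set of pairs `(i,j)` with `i < j`, indexing the rows of `E`. -/
def PairIdx (N : ℕ) : Type := {p : Fin N × Fin N // p.1 < p.2}

instance (N : ℕ) : Fintype (PairIdx N) := by unfold PairIdx; infer_instance
instance (N : ℕ) : DecidableEq (PairIdx N) := by unfold PairIdx; infer_instance

/-- The pairwise-difference matrix `E`, whose row indexed by `(i,j)` with `i < j`
is `e_i - e_j`. -/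
def pairDiffMatrix (N : ℕ) : Matrix (PairIdx N) (Fin N) ℝ :=
  fun p k => (if k = p.1.1 then 1 else 0) - (if k = p.1.2 then 1 else 0)

lemma pairDiff_mulVec (N : ℕ) (x : Fin N → ℝ) (p : PairIdx N) :
    (pairDiffMatrix N).mulVec x p = x p.1.1 - x p.1.2 := by
  simp [pairDiffMatrix, mulVec, dotProduct, sub_mul, Finset.sum_sub_distrib]

lemma ker_pairDiff (N : ℕ) (x : Fin N → ℝ)
    (hx : (pairDiffMatrix N).mulVec x = 0) (i j : Fin N) : x i = x j := by
  rcases lt_trichotomy i j with h | h | h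
  · have := congrFun hx ⟨(i, j), h⟩
    replace this := (pairDiff_mulVec N x ⟨(i, j), h⟩).symm.trans this
    have : x i - x j = 0 := this
    linarith
  · rw [h]
  · have := congrFun hx ⟨(j, i), h⟩
    replace this := (pairDiff_mulVec N x ⟨(j, i), h⟩).symm.trans this
    have : x j - x i = 0 := this
    linarith

/-- If `C` is symmetric positive semidefinite and the all-ones
vector does not lie in the range (column space) of `C`, then `rank(Δ) = rank(C)`,
where `Δ = E C Eᵀ`. -/
theorem rank_Delta_of_ones_not_mem_range (N : ℕ) (hN : 2 ≤ N)
    (C : Matrix (Fin N) (Fin N) ℝ) (hC : C.PosSemidef)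
    (hone : (fun _ => 1 : Fin N → ℝ) ∉ LinearMap.range C.mulVecLin) :
    (pairDiffMatrix N * C * (pairDiffMatrix N)ᵀ).rank = C.rank := by
  obtain ⟨A, hAps, hAA⟩ : ∃ A : Matrix (Fin N) (Fin N) ℝ, A.PosSemidef ∧ A * A = C :=
    by
      open scoped MatrixOrder in
      exact ⟨CFC.sqrt C, (CFC.sqrt_nonneg C).posSemidef, CFC.sqrt_mul_sqrt_self C hC.nonneg⟩
  have hAh : Aᴴ = A := hAps.isHermitian
  set E := pairDiffMatrix N with hE
  -- rank C = rank A
  have hrCA : C.rank = A.rank := by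
    have : C = A * Aᴴ := by rw [hAh, hAA]
    rw [this]
    exact Matrix.rank_self_mul_conjTranspose A
  -- Δ = (E*A) * (E*A)ᴴ
  have hΔ : E * C * Eᵀ = (E * A) * (E * A)ᴴ := by
    rw [conjTranspose_mul, hAh, ← hAA]
    have : Eᴴ = Eᵀ := rfl
    rw [this]
    simp only [Matrix.mul_assoc]
  rw [hΔ, Matrix.rank_self_mul_conjTranspose, hrCA]
  -- now: rank (E * A) = rank A
  -- range C = range A
  have hsub : LinearMap.range C.mulVecLin ≤ LinearMap.range A.mulVecLin := by
    rw [← hAA, mulVecLin_mul, LinearMap.range_comp]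
    exact LinearMap.map_le_range
  have heqr : LinearMap.range C.mulVecLin = LinearMap.range A.mulVecLin := by
    apply Submodule.eq_of_le_of_finrank_le hsub
    exact le_of_eq hrCA.symm
  have honeA : (fun _ => 1 : Fin N → ℝ) ∉ LinearMap.range A.mulVecLin := by
    rw [← heqr]; exact hone
  -- kernel of the restriction of E to the range of A is trivial
  set f : (LinearMap.range A.mulVecLin) →ₗ[ℝ] (PairIdx N → ℝ) :=
    E.mulVecLin ∘ₗ (LinearMap.range A.mulVecLin).subtype with hf
  have hinj : Function.Injective f := by
    rw [← LinearMap.ker_eq_bot]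
    rw [Submodule.eq_bot_iff]
    rintro ⟨v, hv⟩ hker
    have hEv : E.mulVec v = 0 := hker
    -- v is constant
    have hconst : ∀ i : Fin N, v i = v ⟨0, by omega⟩ :=
      fun i => ker_pairDiff N v hEv i _
    have hv0 : v ⟨0, by omega⟩ = 0 := by
      by_contra hc
      apply honeA
      have : (fun _ => 1 : Fin N → ℝ) = (v ⟨0, by omega⟩)⁻¹ • v := by
        funext i
        simp [Pi.smul_apply, hconst i, inv_mul_cancel₀ hc]
      rw [this]
      exact Submodule.smul_mem _ _ hv
    have : v = 0 := by funext i; rw [hconst i, hv0]; rfl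
    simp [this]
  have hrange : LinearMap.range f = LinearMap.range (E * A).mulVecLin := by
    rw [hf, LinearMap.range_comp, Submodule.range_subtype, mulVecLin_mul,
      LinearMap.range_comp]
  have := LinearMap.finrank_range_of_inj hinj
  rw [hrange] at this
  rw [Matrix.rank, this, Matrix.rank]
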